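/- Let a : ℕ → ℕ → ℝ and ε > 0 be such that the double series ∑_{i,j} |a i j| ε^{i+j} converges, and define G(r,s) = ∑_{i,j} a i j · r^i · s^j for |r|, |s| < ε. Suppose that G(r, 0) = G(-r, r) for all real r with |r| < ε. Let k ∈ ℕ and suppose that a i j = 0 whenever i ≤ 2k and j ≥ 1. Then a (2k+1) 0 = 0. (This is the analytic core of Vanhecke's lemma: if the volume density coefficients a_0, …, a_{2k} are constant along geodesics, then the symmetry of the volume density under the geodesic involution forces the (2k+1)-st coefficient at the base point to vanish.) -/

import Mathlib

/-!
Restricting `G` to the lines `s = 0` and `(r, s) = (-r, r)` gives two one-variable power series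
in `r`, with coefficients `a n 0` and `∑_{i+j=n} (-1)^i a i j`. The symmetry makes them agree
near `0`, so their coefficients agree. For `n = 2k+1` the vanishing hypothesis kills every term
of the second sum except `(-1)^(2k+1) a (2k+1) 0`, whence `a (2k+1) 0 = -a (2k+1) 0`.
-/

open Finset Filter Topology FormalMultilinearSeries

theorem HasSum.sum_antidiagonal {α : Type*} [AddCommMonoid α] [TopologicalSpace α]
    [ContinuousAdd α] [RegularSpace α] {F : ℕ × ℕ → α} {s : α} (h : HasSum F s) :
    HasSum (fun n => ∑ kl ∈ antidiagonal n, F kl) s :=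
  (HasAntidiagonal.sigmaAntidiagonalEquivProd.hasSum_iff.mpr h).sigma fun n => by
    simpa [sum_attach] using hasSum_fintype fun kl : antidiagonal n => F kl

theorem hasFPowerSeriesAt_ofScalarsSum_of_summable {c : ℕ → ℝ} {ε : ℝ} (hε : 0 < ε)
    (hc : Summable fun n => |c n| * ε ^ n) :
    HasFPowerSeriesAt (ofScalarsSum (E := ℝ) c) (ofScalars ℝ c) 0 := by
  have hradius : (ε.toNNReal : ENNReal) ≤ (ofScalars ℝ c).radius :=
    (ofScalars ℝ c).le_radius_of_summable_norm (by simpa [hε.le] using hc)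
  exact ((ofScalars ℝ c).hasFPowerSeriesOnBall
    ((by simpa using hε : (0 : ENNReal) < ε.toNNReal).trans_le hradius)).hasFPowerSeriesAt

theorem eq_of_tsum_mul_pow_eq {c c' : ℕ → ℝ} {ε : ℝ} (hε : 0 < ε)
    (hc : Summable fun n => |c n| * ε ^ n) (hc' : Summable fun n => |c' n| * ε ^ n)
    (h : ∀ x : ℝ, |x| < ε → ∑' n, c n * x ^ n = ∑' n, c' n * x ^ n) : c = c' := by
  have hsum_eq : ofScalarsSum (E := ℝ) c =ᶠ[𝓝 0] ofScalarsSum c' := by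
    filter_upwards [Metric.ball_mem_nhds 0 hε] with x hx
    simpa [ofScalars_sum_eq] using h x (by simpa using hx)
  exact ofScalars_series_injective (𝕜 := ℝ) ℝ
    (((hasFPowerSeriesAt_ofScalarsSum_of_summable hε hc).congr hsum_eq).eq_formalMultilinearSeries
      (hasFPowerSeriesAt_ofScalarsSum_of_summable hε hc'))

/-- The `n`-th coefficient of `r ↦ ∑ a i j (u r)^i (v r)^j`, the double series along the line
through `(u, v)`. -/
noncomputable def lineCoeff (a : ℕ → ℕ → ℝ) (u v : ℝ) (n : ℕ) : ℝ :=
  ∑ kl ∈ antidiagonal n, a kl.1 kl.2 * u ^ kl.1 * v ^ kl.2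

section DoubleSeries

variable {a : ℕ → ℕ → ℝ} {ε : ℝ}

theorem summable_mul_pow_mul_pow
    (hsum : Summable fun p : ℕ × ℕ => |a p.1 p.2| * ε ^ (p.1 + p.2))
    {x y : ℝ} (hx : |x| ≤ ε) (hy : |y| ≤ ε) :
    Summable fun p : ℕ × ℕ => a p.1 p.2 * x ^ p.1 * y ^ p.2 := by
  have hε : 0 ≤ ε := (abs_nonneg x).trans hx
  refine .of_norm_bounded hsum fun p => ?_
  rw [norm_mul, norm_mul, norm_pow, norm_pow, Real.norm_eq_abs, Real.norm_eq_abs,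
    Real.norm_eq_abs, pow_add, mul_assoc]
  gcongr

theorem hasSum_lineCoeff_mul_pow
    (hsum : Summable fun p : ℕ × ℕ => |a p.1 p.2| * ε ^ (p.1 + p.2))
    {u v r : ℝ} (hu : |u| ≤ 1) (hv : |v| ≤ 1) (hr : |r| ≤ ε) :
    HasSum (fun n => lineCoeff a u v n * r ^ n)
      (∑' p : ℕ × ℕ, a p.1 p.2 * (u * r) ^ p.1 * (v * r) ^ p.2) := by
  have hbound : ∀ w : ℝ, |w| ≤ 1 → |w * r| ≤ ε := fun w hw =>
    ((abs_mul w r).trans_le (mul_le_of_le_one_left (abs_nonneg r) hw)).trans hr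
  refine (summable_mul_pow_mul_pow hsum (hbound u hu) (hbound v hv)).hasSum.sum_antidiagonal
    |>.congr_fun fun n => ?_
  rw [lineCoeff, sum_mul]
  refine sum_congr rfl fun kl hkl => ?_
  rw [← mem_antidiagonal.mp hkl]
  ring

theorem summable_abs_lineCoeff_mul_pow
    (hsum : Summable fun p : ℕ × ℕ => |a p.1 p.2| * ε ^ (p.1 + p.2))
    (hε : 0 ≤ ε) {u v : ℝ} (hu : |u| ≤ 1) (hv : |v| ≤ 1) :
    Summable fun n => |lineCoeff a u v n| * ε ^ n := by
  refine hsum.hasSum.sum_antidiagonal.summable.of_nonneg_of_le (fun n => by positivity)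
    fun n => ?_
  calc |lineCoeff a u v n| * ε ^ n
      ≤ (∑ kl ∈ antidiagonal n, |a kl.1 kl.2 * u ^ kl.1 * v ^ kl.2|) * ε ^ n := by
        gcongr; exact abs_sum_le_sum_abs _ _
    _ ≤ ∑ kl ∈ antidiagonal n, |a kl.1 kl.2| * ε ^ (kl.1 + kl.2) := by
        rw [sum_mul]
        refine sum_le_sum fun kl hkl => ?_
        rw [mem_antidiagonal.mp hkl, abs_mul, abs_mul, abs_pow, abs_pow]
        gcongr
        calc |a kl.1 kl.2| * |u| ^ kl.1 * |v| ^ kl.2 ≤ |a kl.1 kl.2| * 1 * 1 := by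
              gcongr <;> exact pow_le_one₀ (abs_nonneg _) ‹_›
          _ = |a kl.1 kl.2| := by ring

theorem lineCoeff_one_zero (n : ℕ) : lineCoeff a 1 0 n = a n 0 := by
  rw [lineCoeff, sum_eq_single (n, 0)]
  · simp
  · rintro ⟨i, j⟩ hij hne
    have hj : j ≠ 0 := by rintro rfl; simp_all
    simp [hj]
  · simp

theorem lineCoeff_eq_of_forall_eq_zero {n : ℕ} (h : ∀ i j, i + j = n → 1 ≤ j → a i j = 0)
    (u v : ℝ) : lineCoeff a u v n = a n 0 * u ^ n := by
  rw [lineCoeff, sum_eq_single (n, 0)]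
  · simp
  · rintro ⟨i, j⟩ hij hne
    have hj : 1 ≤ j := Nat.one_le_iff_ne_zero.mpr (by rintro rfl; simp_all)
    simp [h i j (mem_antidiagonal.mp hij) hj]
  · simp

end DoubleSeries

/-- **Analytic core of Vanhecke's lemma.**
Let `a : ℕ → ℕ → ℝ` with `∑_{i,j} |a i j| ε^(i+j) < ∞` for some `ε > 0`, and set
`G (r, s) = ∑_{i,j} a i j r^i s^j` on the polydisc `|r|, |s| < ε`.  Assume the
symmetry `G (r, 0) = G (-r, r)` for all `|r| < ε`, and that `a i j = 0` whenever
`i ≤ 2k` and `j ≥ 1`.  Then `a (2k+1) 0 = 0`. -/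
theorem vanhecke_core (a : ℕ → ℕ → ℝ) (ε : ℝ) (hε : 0 < ε)
    (hsum : Summable (fun p : ℕ × ℕ => |a p.1 p.2| * ε ^ (p.1 + p.2)))
    (G : ℝ → ℝ → ℝ)
    (hG : ∀ r s : ℝ, |r| < ε → |s| < ε →
      G r s = ∑' p : ℕ × ℕ, a p.1 p.2 * r ^ p.1 * s ^ p.2)
    (hsym : ∀ r : ℝ, |r| < ε → G r 0 = G (-r) r)
    (k : ℕ)
    (hvanish : ∀ i j : ℕ, i ≤ 2 * k → 1 ≤ j → a i j = 0) :
    a (2 * k + 1) 0 = 0 := by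
  have hG_line : ∀ {u v r : ℝ}, |u| ≤ 1 → |v| ≤ 1 → |r| < ε →
      ∑' n, lineCoeff a u v n * r ^ n = G (u * r) (v * r) := fun {u v r} hu hv hr => by
    have hbound : ∀ w : ℝ, |w| ≤ 1 → |w * r| < ε := fun w hw =>
      ((abs_mul w r).trans_le (mul_le_of_le_one_left (abs_nonneg r) hw)).trans_lt hr
    rw [(hasSum_lineCoeff_mul_pow hsum hu hv hr.le).tsum_eq, hG _ _ (hbound u hu) (hbound v hv)]
  have hcoeff : lineCoeff a 1 0 = lineCoeff a (-1) 1 :=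
    eq_of_tsum_mul_pow_eq hε (summable_abs_lineCoeff_mul_pow hsum hε.le (by simp) (by simp))
      (summable_abs_lineCoeff_mul_pow hsum hε.le (by simp) (by simp)) fun r hr => by
        rw [hG_line (by simp) (by simp) hr, hG_line (by simp) (by simp) hr]
        simpa using hsym r hr
  have h := congrFun hcoeff (2 * k + 1)
  rw [lineCoeff_one_zero,
    lineCoeff_eq_of_forall_eq_zero fun i j hij hj => hvanish i j (by omega) hj,
    Odd.neg_one_pow (odd_two_mul_add_one k)] at h
  linarith
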